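/- The function p(x,t) = (t/(π√2))·(t²+x²)/(t⁴+x⁴) is a probability density in x for each t > 0 (it is nonnegative and ∫_{-∞}^{∞} p(x,t) dx = 1), and it satisfies the fourth-order PDE ∂⁴p/∂t⁴ + ∂⁴p/∂x⁴ = 0 for x ∈ ℝ, t > 0. -/

import Mathlib

open Real MeasureTheory

/-- Density of the composition `F(T_t)`. -/
noncomputable def doubleCauchy (x t : ℝ) : ℝ :=
  (t / (Real.pi * Real.sqrt 2)) * ((t ^ 2 + x ^ 2) / (t ^ 4 + x ^ 4))

/-!
Since `t⁴ + x⁴ = (x² + √2 t x + t²)(x² - √2 t x + t²)`, `doubleCauchy · t` is the average of the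
two Cauchy densities of scale `t/√2` centred at `∓t/√2`, which gives the normalisation. The same
decomposition reads `doubleCauchy x t = (2π)⁻¹ Re ∑_{ζ = e^{±iπ/4}} (ζ t + i x)⁻¹`: each summand is a
function of `ζ t + i x`, so `∂ₜ⁴` brings out `ζ⁴ = -1` and `∂ₓ⁴` brings out `i⁴ = 1`, and the two
fourth derivatives cancel.
-/

open Set ProbabilityTheory
open Complex (I)
open scoped Nat

theorem eqOn_iterate_deriv_of_hasDerivAt {𝕜 F : Type*} [NontriviallyNormedField 𝕜]
    [NormedAddCommGroup F] [NormedSpace 𝕜 F] {U : Set 𝕜} (hU : IsOpen U) {f : 𝕜 → F}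
    {g : ℕ → 𝕜 → F} (hf : EqOn f (g 0) U)
    (hg : ∀ n, ∀ x ∈ U, HasDerivAt (g n) (g (n + 1) x) x) (n : ℕ) :
    EqOn (deriv^[n] f) (g n) U := by
  induction n with
  | zero => exact hf
  | succ n ih =>
    intro x hx
    rw [Function.iterate_succ_apply', (ih.eventuallyEq_of_mem (hU.mem_nhds hx)).deriv_eq]
    exact (hg n x hx).deriv

theorem hasDerivAt_mul_add_zpow {a b z : ℂ} (m : ℤ) (h : a * z + b ≠ 0) :
    HasDerivAt (fun z => (a * z + b) ^ m) (m * a * (a * z + b) ^ (m - 1)) z := by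
  have := (hasDerivAt_zpow m _ (Or.inl h)).comp z (((hasDerivAt_id z).const_mul a).add_const b)
  exact this.congr_deriv (by ring)

theorem eqOn_iterate_deriv_re_sum_inv_affine {ι : Type*} {s : Finset ι} {k a b : ι → ℂ}
    {U : Set ℝ} (hU : IsOpen U) (hne : ∀ t ∈ U, ∀ j ∈ s, a j * t + b j ≠ 0) {f : ℝ → ℝ}
    (hf : EqOn f (fun t => (∑ j ∈ s, k j * (a j * t + b j)⁻¹).re) U) (n : ℕ) :
    EqOn (deriv^[n] f)
      (fun t => (∑ j ∈ s, k j * ((-1) ^ n * n ! * a j ^ n * (a j * t + b j) ^ (-(n + 1 : ℤ)))).re)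
      U := by
  refine eqOn_iterate_deriv_of_hasDerivAt hU (g := fun n t =>
    (∑ j ∈ s, k j * ((-1) ^ n * n ! * a j ^ n * (a j * t + b j) ^ (-(n + 1 : ℤ)))).re)
    (fun t ht => by simp [hf ht]) (fun n t ht => ?_) n
  refine HasDerivAt.real_of_complex
    (e := fun z => ∑ j ∈ s, k j * ((-1) ^ n * n ! * a j ^ n * (a j * z + b j) ^ (-(n + 1 : ℤ)))) ?_
  have hterm : ∀ j ∈ s, HasDerivAt
      (fun z : ℂ => k j * ((-1) ^ n * n ! * a j ^ n * (a j * z + b j) ^ (-(n + 1 : ℤ))))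
      (k j * ((-1) ^ n * n ! * a j ^ n) *
        (((-(n + 1) : ℤ) : ℂ) * a j * (a j * t + b j) ^ (-(n + 1 : ℤ) - 1))) t := fun j hj => by
    simpa only [mul_assoc] using
      (hasDerivAt_mul_add_zpow _ (hne t ht j hj)).const_mul (k j * ((-1) ^ n * n ! * a j ^ n))
  refine (HasDerivAt.fun_sum hterm).congr_deriv (Finset.sum_congr rfl fun j _ => ?_)
  rw [show -((n : ℤ) + 1) - 1 = -(((n + 1 : ℕ) : ℤ) + 1) by push_cast; ring, Nat.factorial_succ]
  push_cast
  ring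

theorem cauchyPDFReal_eq_re_inv (x₀ : ℝ) (γ : NNReal) (x : ℝ) :
    cauchyPDFReal x₀ γ x = ((π⁻¹ : ℝ) * ((γ : ℝ) + I * (x - x₀) : ℂ)⁻¹).re := by
  rw [cauchyPDFReal_def, Complex.re_ofReal_mul, Complex.inv_re, Complex.normSq_apply]
  simp
  ring

theorem doubleCauchy_eq_average_cauchyPDFReal {t : ℝ} (ht : 0 < t) (x : ℝ) :
    doubleCauchy x t = (cauchyPDFReal (-(t / √2)) (t / √2).toNNReal x +
      cauchyPDFReal (t / √2) (t / √2).toNNReal x) / 2 := by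
  have hu : 0 < t / √2 := by positivity
  rw [cauchyPDFReal_def, cauchyPDFReal_def, Real.coe_toNNReal _ hu.le, doubleCauchy]
  have : 0 < t ^ 4 + x ^ 4 := by positivity
  have : 0 < (x - -(t / √2)) ^ 2 + (t / √2) ^ 2 := by positivity
  have : 0 < (x - t / √2) ^ 2 + (t / √2) ^ 2 := by positivity
  field_simp
  ring_nf
  rw [show √2 ^ 4 = (√2 ^ 2) ^ 2 by ring, Real.sq_sqrt zero_le_two]
  ring

theorem integral_doubleCauchy {t : ℝ} (ht : 0 < t) : ∫ x, doubleCauchy x t = 1 := by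
  have hγ : (t / √2).toNNReal ≠ 0 := by simpa using ht
  simp_rw [doubleCauchy_eq_average_cauchyPDFReal ht]
  rw [integral_div, integral_add (integrable_cauchyPDFReal _) (integrable_cauchyPDFReal _),
    integral_cauchyPDFReal_eq_one _ hγ, integral_cauchyPDFReal_eq_one _ hγ]
  norm_num

theorem exp_mul_pi_div_four_mul_I {σ : ℝ} (hσ : σ = 1 ∨ σ = -1) :
    Complex.exp (↑(σ * π / 4) * I) = ((√2)⁻¹ : ℝ) * (1 + σ * I) := by
  have h : √2 / 2 = (√2)⁻¹ := by
    field_simp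
    exact Real.sq_sqrt zero_le_two
  rw [Complex.exp_mul_I, ← Complex.ofReal_cos, ← Complex.ofReal_sin]
  rcases hσ with rfl | rfl
  · simp [Real.cos_pi_div_four, Real.sin_pi_div_four, h]
    ring
  · simp [neg_div, Real.cos_pi_div_four, Real.sin_pi_div_four, h]
    ring

theorem exp_mul_pi_div_four_mul_I_pow_four {σ : ℝ} (hσ : σ = 1 ∨ σ = -1) :
    Complex.exp (↑(σ * π / 4) * I) ^ 4 = -1 := by
  rw [← Complex.exp_nat_mul]
  rcases hσ with rfl | rfl
  · convert Complex.exp_pi_mul_I using 2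
    push_cast
    ring
  · convert Complex.exp_neg_pi_mul_I using 2
    push_cast
    ring

theorem exp_mul_pi_div_four_mul_I_mul_add_I_mul_ne_zero {σ : ℝ} (hσ : σ = 1 ∨ σ = -1) {t : ℝ}
    (ht : 0 < t) (x : ℝ) : Complex.exp (↑(σ * π / 4) * I) * t + I * x ≠ 0 := by
  rw [exp_mul_pi_div_four_mul_I hσ]
  intro h
  simpa [ht.ne'] using congrArg Complex.re h

theorem doubleCauchy_eq_re_sum {t : ℝ} (ht : 0 < t) (x : ℝ) :
    doubleCauchy x t = (∑ σ ∈ ({1, -1} : Finset ℝ),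
      (((2 * π)⁻¹ : ℝ) : ℂ) * (Complex.exp (↑(σ * π / 4) * I) * t + I * x)⁻¹).re := by
  have hroot (σ : ℝ) (hσ : σ = 1 ∨ σ = -1) : Complex.exp (↑(σ * π / 4) * I) * t + I * x =
      (((t / √2).toNNReal : ℝ) : ℂ) + I * ((x : ℂ) - ((-(σ * (t / √2)) : ℝ) : ℂ)) := by
    rw [exp_mul_pi_div_four_mul_I hσ, Real.coe_toNNReal _ (by positivity)]
    push_cast
    ring
  rw [Finset.sum_pair (by norm_num), Complex.add_re, hroot 1 (.inl rfl), hroot (-1) (.inr rfl),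
    doubleCauchy_eq_average_cauchyPDFReal ht, cauchyPDFReal_eq_re_inv, cauchyPDFReal_eq_re_inv]
  simp only [Complex.re_ofReal_mul, one_mul, neg_mul, neg_neg]
  ring

theorem iterate_deriv_doubleCauchy_time (n : ℕ) (x : ℝ) {s : ℝ} (hs : 0 < s) :
    deriv^[n] (fun τ => doubleCauchy x τ) s = (∑ σ ∈ ({1, -1} : Finset ℝ),
      (((2 * π)⁻¹ : ℝ) : ℂ) * ((-1) ^ n * n ! * Complex.exp (↑(σ * π / 4) * I) ^ n *
        (Complex.exp (↑(σ * π / 4) * I) * s + I * x) ^ (-(n + 1 : ℤ)))).re :=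
  eqOn_iterate_deriv_re_sum_inv_affine (k := fun _ => _) (b := fun _ => I * x) isOpen_Ioi
    (fun _ hτ _ hσ => exp_mul_pi_div_four_mul_I_mul_add_I_mul_ne_zero (by simpa using hσ) hτ x)
    (fun _ hτ => doubleCauchy_eq_re_sum hτ x) n hs

theorem iterate_deriv_doubleCauchy_space (n : ℕ) {s : ℝ} (hs : 0 < s) (x : ℝ) :
    deriv^[n] (fun y => doubleCauchy y s) x = (∑ σ ∈ ({1, -1} : Finset ℝ),
      (((2 * π)⁻¹ : ℝ) : ℂ) * ((-1) ^ n * n ! * I ^ n *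
        (I * x + Complex.exp (↑(σ * π / 4) * I) * s) ^ (-(n + 1 : ℤ)))).re :=
  eqOn_iterate_deriv_re_sum_inv_affine (k := fun _ => _) (a := fun _ => I) isOpen_univ
    (fun y _ _ hσ => by
      rw [add_comm]
      exact exp_mul_pi_div_four_mul_I_mul_add_I_mul_ne_zero (by simpa using hσ) hs y)
    (fun y _ => by simp only [doubleCauchy_eq_re_sum hs y, add_comm]) n (mem_univ x)

theorem iterate_deriv_four_doubleCauchy_time_add_space (x : ℝ) {s : ℝ} (hs : 0 < s) :
    (deriv^[4] fun τ => doubleCauchy x τ) s + (deriv^[4] fun y => doubleCauchy y s) x = 0 := by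
  rw [iterate_deriv_doubleCauchy_time 4 x hs, iterate_deriv_doubleCauchy_space 4 hs x,
    ← Complex.add_re, ← Finset.sum_add_distrib, Finset.sum_eq_zero, Complex.zero_re]
  intro σ hσ
  rw [exp_mul_pi_div_four_mul_I_pow_four (by simpa using hσ), Complex.I_pow_four,
    add_comm (I * x)]
  ring

theorem double_cauchy_density (t : ℝ) (ht : 0 < t) :
    (∀ x : ℝ, 0 ≤ doubleCauchy x t) ∧
    (∫ x : ℝ, doubleCauchy x t) = 1 ∧
    (∀ x : ℝ, ∀ s : ℝ, 0 < s →
      (deriv^[4] fun τ => doubleCauchy x τ) s +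
        (deriv^[4] fun y => doubleCauchy y s) x = 0) := by
  refine ⟨fun x => ?_, integral_doubleCauchy ht,
    fun x s hs => iterate_deriv_four_doubleCauchy_time_add_space x hs⟩
  unfold doubleCauchy
  positivity
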